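/- arXiv:0804.3943 — 2 statements merged into one kernel-verified Lean document; each statement's English description precedes it below -/
import Mathlib

section
/- Assume H is strictly convex (d_k > 0 for some finite k ≥ 2). For n ≥ 1 let H_n(s) = ∑_{k=1}^{n−1} d_k s^k + (1 − ∑_{k=1}^{n−1} d_k) s^n, let μ_n¹ be the unique root in (0,1) of H_n(x) + x = 1, and let μ_n² = min{x ∈ [0,1] : H_n(x) − x = 1 − 2μ_n¹} (this set is nonempty and closed, containing μ_n¹). Similarly let μ² = min{x ∈ [0,1] : H(x) − x = 1 − 2μ¹}. Then μ_n² → μ² as n → ∞. -/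
/-!
On `[0,1]` one has `H ≤ H_n ≤ H + xⁿ`, so `H_n → H` uniformly on every `[0,a]` with `a < 1`.
Since `H_n + id` is increasing, this gives `μ_n¹ → μ¹`, hence the levels `c_n = 1 - 2μ_n¹`
converge to `c = 1 - 2μ¹`, which is negative because strict convexity gives `H(x) < x` on `(0,1)`.

Below `μ²` the continuous function `H(x) - x - c` has no zero, so it is bounded away from zero
on `[0, μ² - ε]`, and uniform convergence keeps `μ_n²` above `μ² - ε`. Above `μ²`: if `μ² < μ¹`,
strict convexity of `H(x) - x` puts it below `c` at points just right of `μ²`, while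
`H_n(0) - 0 = 0 > c_n`, so the intermediate value theorem produces a solution of
`H_n(x) - x = c_n` to the left of such a point; if `μ² = μ¹`, use `μ_n² ≤ μ_n¹ → μ¹`.
-/

open MeasureTheory ProbabilityTheory Filter Topology

/-- The generating function `H(x) = ∑_{k≥1} d_k x^k` (we use `d : ℕ → ℝ` with `d 0 = 0`). -/
noncomputable def genFun (d : ℕ → ℝ) (x : ℝ) : ℝ := ∑' k, d k * x ^ k

/-- The derivative `H'(x) = ∑_{k≥1} k d_k x^(k-1)`. -/
noncomputable def genFunDeriv (d : ℕ → ℝ) (x : ℝ) : ℝ :=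
  ∑' k : ℕ, ((k : ℝ) + 1) * d (k + 1) * x ^ k

/-- The truncated generating function
`H_n(s) = ∑_{k=1}^{n-1} d_k s^k + (1 - ∑_{k=1}^{n-1} d_k) s^n`,
the generating function of `min(n, N)` (recall `d 0 = 0`). -/
noncomputable def genFunTrunc (d : ℕ → ℝ) (n : ℕ) (s : ℝ) : ℝ :=
  ∑ k ∈ Finset.range n, d k * s ^ k + (1 - ∑ k ∈ Finset.range n, d k) * s ^ n

/-- The derivative of the truncated generating function,
`H_n'(s) = ∑_{k=1}^{n-1} k d_k s^(k-1) + n (1 - ∑_{k=1}^{n-1} d_k) s^(n-1)`. -/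
noncomputable def genFunTruncDeriv (d : ℕ → ℝ) (n : ℕ) (s : ℝ) : ℝ :=
  ∑ k ∈ Finset.range n, (k : ℝ) * d k * s ^ (k - 1) +
    (n : ℝ) * (1 - ∑ k ∈ Finset.range n, d k) * s ^ (n - 1)

open Set

variable {d : ℕ → ℝ}

lemma summable_mul_pow (hdnn : ∀ k, 0 ≤ d k) (hdsum : Summable d) {x : ℝ}
    (hx : x ∈ Icc (0 : ℝ) 1) : Summable fun k => d k * x ^ k :=
  hdsum.of_nonneg_of_le (fun k => mul_nonneg (hdnn k) (pow_nonneg hx.1 k))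
    (fun k => mul_le_of_le_one_right (hdnn k) (pow_le_one₀ hx.1 hx.2))

lemma genFun_zero (hd0 : d 0 = 0) : genFun d 0 = 0 := by
  rw [genFun, tsum_eq_single 0 fun k hk => by simp [hk]]
  simp [hd0]

lemma genFun_one : genFun d 1 = ∑' k, d k := by
  simp [genFun]

lemma monotoneOn_genFun (hdnn : ∀ k, 0 ≤ d k) (hdsum : Summable d) :
    MonotoneOn (genFun d) (Icc 0 1) := fun _ hx _ hy hxy =>
  Summable.tsum_le_tsum (fun k => mul_le_mul_of_nonneg_left (pow_le_pow_left₀ hx.1 hxy k) (hdnn k))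
    (summable_mul_pow hdnn hdsum hx) (summable_mul_pow hdnn hdsum hy)

lemma strictConvexOn_genFun (hdnn : ∀ k, 0 ≤ d k) (hdsum : Summable d)
    (hconv : ∃ k : ℕ, 2 ≤ k ∧ 0 < d k) : StrictConvexOn ℝ (Icc 0 1) (genFun d) := by
  refine ⟨convex_Icc 0 1, fun x hx y hy hxy a b ha hb hab => ?_⟩
  obtain ⟨k₀, hk₀, hdk₀⟩ := hconv
  have hsx := summable_mul_pow hdnn hdsum hx
  have hsy := summable_mul_pow hdnn hdsum hy
  have hxy_mem : a • x + b • y ∈ Icc (0 : ℝ) 1 := convex_Icc 0 1 hx hy ha.le hb.le hab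
  calc genFun d (a • x + b • y)
      < ∑' k, (a * (d k * x ^ k) + b * (d k * y ^ k)) := by
        refine Summable.tsum_lt_tsum (i := k₀) (fun k => ?_) ?_
          (summable_mul_pow hdnn hdsum hxy_mem) ((hsx.mul_left a).add (hsy.mul_left b))
        · have := (convexOn_pow k).2 hx.1 hy.1 ha.le hb.le hab
          simp only [smul_eq_mul] at this ⊢
          nlinarith [hdnn k]
        · have := (strictConvexOn_pow hk₀).2 hx.1 hy.1 hxy ha hb hab
          simp only [smul_eq_mul] at this ⊢
          nlinarith
    _ = a • genFun d x + b • genFun d y := by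
        rw [(hsx.mul_left a).tsum_add (hsy.mul_left b), tsum_mul_left, tsum_mul_left]
        rfl

lemma genFun_lt_self (hd0 : d 0 = 0) (hdnn : ∀ k, 0 ≤ d k) (hdsum : Summable d)
    (hdle : ∑' k, d k ≤ 1) (hconv : ∃ k : ℕ, 2 ≤ k ∧ 0 < d k) {x : ℝ} (hx : x ∈ Ioo (0 : ℝ) 1) :
    genFun d x < x := by
  have h := (strictConvexOn_genFun hdnn hdsum hconv).2 (left_mem_Icc.2 zero_le_one)
    (right_mem_Icc.2 zero_le_one) zero_ne_one (sub_pos.2 hx.2) hx.1 (sub_add_cancel 1 x)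
  simp only [smul_eq_mul, mul_zero, mul_one, zero_add, genFun_zero hd0, genFun_one] at h
  nlinarith [hx.1]

lemma genFunTrunc_le_genFun_add_pow (hdnn : ∀ k, 0 ≤ d k) (hdsum : Summable d) (n : ℕ) {x : ℝ}
    (hx : x ∈ Icc (0 : ℝ) 1) : genFunTrunc d n x ≤ genFun d x + x ^ n := by
  have hhead : ∑ k ∈ Finset.range n, d k * x ^ k ≤ genFun d x :=
    (summable_mul_pow hdnn hdsum hx).sum_le_tsum _
      fun k _ => mul_nonneg (hdnn k) (pow_nonneg hx.1 k)
  have hcoef : (1 - ∑ k ∈ Finset.range n, d k) * x ^ n ≤ x ^ n :=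
    mul_le_of_le_one_left (pow_nonneg hx.1 n)
      (sub_le_self _ (Finset.sum_nonneg fun k _ => hdnn k))
  rw [genFunTrunc]
  linarith

lemma genFun_le_genFunTrunc (hdnn : ∀ k, 0 ≤ d k) (hdsum : Summable d) (hdle : ∑' k, d k ≤ 1)
    (n : ℕ) {x : ℝ} (hx : x ∈ Icc (0 : ℝ) 1) : genFun d x ≤ genFunTrunc d n x := by
  have hs := summable_mul_pow hdnn hdsum hx
  have htail : ∑' k, d (k + n) * x ^ (k + n) ≤ (∑' k, d (k + n)) * x ^ n := by
    rw [← tsum_mul_right]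
    refine Summable.tsum_le_tsum (fun k => ?_) ((summable_nat_add_iff n).2 hs)
      (((summable_nat_add_iff n).2 hdsum).mul_right _)
    exact mul_le_mul_of_nonneg_left (pow_le_pow_of_le_one hx.1 hx.2 (Nat.le_add_left n k)) (hdnn _)
  have hmass : (∑' k, d (k + n)) * x ^ n ≤ (1 - ∑ k ∈ Finset.range n, d k) * x ^ n :=
    mul_le_mul_of_nonneg_right (by linarith [hdsum.sum_add_tsum_nat_add n]) (pow_nonneg hx.1 n)
  rw [genFun, ← hs.sum_add_tsum_nat_add n, genFunTrunc]
  linarith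

lemma monotoneOn_genFunTrunc (hdnn : ∀ k, 0 ≤ d k) (hdsum : Summable d) (hdle : ∑' k, d k ≤ 1)
    (n : ℕ) : MonotoneOn (genFunTrunc d n) (Ici 0) := by
  intro x hx y _ hxy
  have hcoef : 0 ≤ 1 - ∑ k ∈ Finset.range n, d k :=
    sub_nonneg.2 ((hdsum.sum_le_tsum _ fun k _ => hdnn k).trans hdle)
  refine add_le_add (Finset.sum_le_sum fun k _ => ?_) ?_
  · exact mul_le_mul_of_nonneg_left (pow_le_pow_left₀ hx hxy k) (hdnn k)
  · exact mul_le_mul_of_nonneg_left (pow_le_pow_left₀ hx hxy n) hcoef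

lemma continuous_genFunTrunc (d : ℕ → ℝ) (n : ℕ) : Continuous (genFunTrunc d n) := by
  unfold genFunTrunc
  fun_prop

lemma genFunTrunc_zero (hd0 : d 0 = 0) {n : ℕ} (hn : n ≠ 0) : genFunTrunc d n 0 = 0 := by
  simp [genFunTrunc, zero_pow_eq, hd0, hn]

lemma tendstoUniformlyOn_genFunTrunc (hdnn : ∀ k, 0 ≤ d k) (hdsum : Summable d)
    (hdle : ∑' k, d k ≤ 1) {a : ℝ} (ha : a < 1) :
    TendstoUniformlyOn (genFunTrunc d) (genFun d) atTop (Icc 0 a) := by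
  rcases lt_or_ge a 0 with ha0 | ha0
  · rw [Icc_eq_empty_of_lt ha0]
    exact tendstoUniformlyOn_empty
  rw [Metric.tendstoUniformlyOn_iff]
  intro ε hε
  filter_upwards [(tendsto_pow_atTop_nhds_zero_of_lt_one ha0 ha).eventually_lt_const hε]
    with n hn x hx
  have hx1 : x ∈ Icc (0 : ℝ) 1 := ⟨hx.1, hx.2.trans ha.le⟩
  have hpow : x ^ n ≤ a ^ n := pow_le_pow_left₀ hx.1 hx.2 n
  rw [Real.dist_eq, abs_sub_lt_iff]
  constructor <;>
    linarith [genFun_le_genFunTrunc hdnn hdsum hdle n hx1,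
      genFunTrunc_le_genFun_add_pow hdnn hdsum n hx1]

lemma tendsto_genFunTrunc (hdnn : ∀ k, 0 ≤ d k) (hdsum : Summable d) (hdle : ∑' k, d k ≤ 1)
    {x : ℝ} (hx : x ∈ Ico (0 : ℝ) 1) :
    Tendsto (fun n => genFunTrunc d n x) atTop (𝓝 (genFun d x)) :=
  (tendstoUniformlyOn_genFunTrunc hdnn hdsum hdle hx.2).tendsto_at ⟨hx.1, le_rfl⟩

lemma continuousOn_genFun (hdnn : ∀ k, 0 ≤ d k) (hdsum : Summable d) (hdle : ∑' k, d k ≤ 1)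
    {a : ℝ} (ha : a < 1) : ContinuousOn (genFun d) (Icc 0 a) :=
  (tendstoUniformlyOn_genFunTrunc hdnn hdsum hdle ha).continuousOn
    (Frequently.of_forall fun n => (continuous_genFunTrunc d n).continuousOn)

lemma trunc_root_le_root (hdnn : ∀ k, 0 ≤ d k) (hdsum : Summable d) (hdle : ∑' k, d k ≤ 1)
    {μ μn : ℝ} (hμ : μ ∈ Icc (0 : ℝ) 1) (hroot : genFun d μ + μ = 1) {n : ℕ}
    (hrootn : genFunTrunc d n μn + μn = 1) : μn ≤ μ := by
  by_contra! hlt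
  have := monotoneOn_genFunTrunc hdnn hdsum hdle n hμ.1 (hμ.1.trans hlt.le) hlt.le
  linarith [genFun_le_genFunTrunc hdnn hdsum hdle n hμ]

lemma tendsto_trunc_root (hdnn : ∀ k, 0 ≤ d k) (hdsum : Summable d) (hdle : ∑' k, d k ≤ 1)
    {μ : ℝ} (hμ : μ ∈ Icc (0 : ℝ) 1) (hroot : genFun d μ + μ = 1) {μn : ℕ → ℝ}
    (hμn : ∀ᶠ n in atTop, 0 ≤ μn n ∧ genFunTrunc d n (μn n) + μn n = 1) :
    Tendsto μn atTop (𝓝 μ) := by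
  refine tendsto_order.2 ⟨fun a ha => ?_, fun b hb => ?_⟩
  · rcases lt_or_ge a 0 with ha0 | ha0
    · filter_upwards [hμn] with n hn using ha0.trans_le hn.1
    have ha1 : a ∈ Ico (0 : ℝ) 1 := ⟨ha0, ha.trans_le hμ.2⟩
    have hHa : genFun d a + a < 1 := by
      linarith [monotoneOn_genFun hdnn hdsum ⟨ha0, ha1.2.le⟩ hμ ha.le]
    filter_upwards [hμn, ((tendsto_genFunTrunc hdnn hdsum hdle ha1).add_const a).eventually_lt_const
      hHa] with n hn hna
    by_contra! hle
    linarith [monotoneOn_genFunTrunc hdnn hdsum hdle n hn.1 ha0 hle]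
  · filter_upwards [hμn] with n hn
    exact (trunc_root_le_root hdnn hdsum hdle hμ hroot hn.2).trans_lt hb

lemma eventually_lt_of_isLeast_genFun (hdnn : ∀ k, 0 ≤ d k) (hdsum : Summable d)
    (hdle : ∑' k, d k ≤ 1) {c : ℝ} {cn : ℕ → ℝ} (hcn : Tendsto cn atTop (𝓝 c)) {m : ℝ}
    (hm : IsLeast {x ∈ Icc (0 : ℝ) 1 | genFun d x - x = c} m) {mn : ℕ → ℝ}
    (hmn : ∀ᶠ n in atTop, mn n ∈ {x ∈ Icc (0 : ℝ) 1 | genFunTrunc d n x - x = cn n})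
    {b : ℝ} (hb : b < m) : ∀ᶠ n in atTop, b < mn n := by
  rcases lt_or_ge b 0 with hb0 | hb0
  · filter_upwards [hmn] with n hn using hb0.trans_le hn.1.1
  have hb1 : b < 1 := hb.trans_le hm.1.1.2
  obtain ⟨x₀, hx₀, hmin⟩ := isCompact_Icc.exists_isMinOn (nonempty_Icc.2 hb0)
    (((continuousOn_genFun hdnn hdsum hdle hb1).sub continuousOn_id).sub continuousOn_const).abs
  set δ := |genFun d x₀ - x₀ - c|
  have hδ : 0 < δ := abs_pos.2 <| sub_ne_zero.2 fun h =>
    (hb.trans_le (hm.2 ⟨⟨hx₀.1, hx₀.2.trans hb1.le⟩, h⟩)).not_ge hx₀.2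
  filter_upwards [hmn, Metric.tendstoUniformlyOn_iff.1
      (tendstoUniformlyOn_genFunTrunc hdnn hdsum hdle hb1) _ (half_pos hδ),
    hcn (Metric.ball_mem_nhds c (half_pos hδ))] with n hn hunif hcn_n
  by_contra! hle
  have hδle : δ ≤ |genFun d (mn n) - mn n - c| := hmin ⟨hn.1.1, hle⟩
  have h₁ := hunif (mn n) ⟨hn.1.1, hle⟩
  have h₂ : dist (cn n) c < δ / 2 := hcn_n
  rw [Real.dist_eq, abs_lt] at h₁ h₂
  have hclose : |genFun d (mn n) - mn n - c| < δ := by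
    rw [abs_lt]
    constructor <;> linarith [hn.2]
  exact hclose.not_ge hδle

lemma eventually_le_of_genFun_sub_self_lt (hd0 : d 0 = 0) (hdnn : ∀ k, 0 ≤ d k)
    (hdsum : Summable d) (hdle : ∑' k, d k ≤ 1) {c : ℝ} {cn : ℕ → ℝ}
    (hcn : Tendsto cn atTop (𝓝 c)) (hc : c < 0) {mn : ℕ → ℝ}
    (hmn : ∀ᶠ n in atTop, IsLeast {x ∈ Icc (0 : ℝ) 1 | genFunTrunc d n x - x = cn n} (mn n))
    {x₀ : ℝ} (hx₀ : x₀ ∈ Ico (0 : ℝ) 1) (hx₀c : genFun d x₀ - x₀ < c) :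
    ∀ᶠ n in atTop, mn n ≤ x₀ := by
  have hlim : Tendsto (fun n => genFunTrunc d n x₀ - x₀ - cn n) atTop
      (𝓝 (genFun d x₀ - x₀ - c)) := ((tendsto_genFunTrunc hdnn hdsum hdle hx₀).sub_const x₀).sub hcn
  filter_upwards [hmn, hlim.eventually_lt_const (sub_neg.2 hx₀c), hcn.eventually_lt_const hc,
    eventually_ne_atTop 0] with n hn hneg hcn_neg hn0
  obtain ⟨z, hz, hz0⟩ := intermediate_value_Icc' hx₀.1
    (((continuous_genFunTrunc d n).sub continuous_id).sub continuous_const).continuousOn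
    (show (0 : ℝ) ∈ Icc _ _ from ⟨hneg.le, by simpa [genFunTrunc_zero hd0 hn0] using hcn_neg.le⟩)
  exact (hn.2 ⟨⟨hz.1, hz.2.trans hx₀.2.le⟩, sub_eq_zero.1 hz0⟩).trans hz.2

/-- with `μ_n² = min {x ∈ [0,1] : H_n(x) - x = 1 - 2 μ_n¹}` and
`μ² = min {x ∈ [0,1] : H(x) - x = 1 - 2 μ¹}`, one has `μ_n² → μ²`. -/
theorem trunc_second_moment_converges (d : ℕ → ℝ) (hd0 : d 0 = 0) (hdnn : ∀ k, 0 ≤ d k)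
    (hdsum : Summable d) (hdle : ∑' k, d k ≤ 1)
    (hconv : ∃ k : ℕ, 2 ≤ k ∧ 0 < d k)
    (μ1 : ℝ) (hμ1 : μ1 ∈ Set.Ioo (0 : ℝ) 1) (hroot : genFun d μ1 + μ1 = 1)
    (μn : ℕ → ℝ)
    (hμn : ∀ n : ℕ, 1 ≤ n → μn n ∈ Set.Ioo (0 : ℝ) 1 ∧ genFunTrunc d n (μn n) + μn n = 1)
    (μn2 : ℕ → ℝ)
    (hμn2 : ∀ n : ℕ, 1 ≤ n →
      IsLeast {x ∈ Set.Icc (0 : ℝ) 1 | genFunTrunc d n x - x = 1 - 2 * μn n} (μn2 n))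
    (μ2 : ℝ) (hμ2 : IsLeast {x ∈ Set.Icc (0 : ℝ) 1 | genFun d x - x = 1 - 2 * μ1} μ2) :
    Tendsto μn2 atTop (nhds μ2) := by
  have hμ1' : μ1 ∈ Icc (0 : ℝ) 1 := Ioo_subset_Icc_self hμ1
  have hμn_lim : Tendsto μn atTop (𝓝 μ1) := tendsto_trunc_root hdnn hdsum hdle hμ1' hroot <|
    (eventually_ge_atTop 1).mono fun n hn => ⟨(hμn n hn).1.1.le, (hμn n hn).2⟩
  have hcn : Tendsto (fun n => 1 - 2 * μn n) atTop (𝓝 (1 - 2 * μ1)) :=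
    (hμn_lim.const_mul 2).const_sub 1
  have hc : 1 - 2 * μ1 < 0 := by linarith [genFun_lt_self hd0 hdnn hdsum hdle hconv hμ1]
  have hμn2_least := (eventually_ge_atTop 1).mono hμn2
  have hμ2_le : μ2 ≤ μ1 := hμ2.2 ⟨hμ1', by linarith⟩
  refine tendsto_order.2 ⟨fun a ha => eventually_lt_of_isLeast_genFun hdnn hdsum hdle hcn hμ2
    (hμn2_least.mono fun n hn => hn.1) ha, fun b hb => ?_⟩
  rcases hμ2_le.lt_or_eq with hlt | heq
  · obtain ⟨x₀, hx₀, hx₀b⟩ : ∃ x₀ ∈ Ioo μ2 μ1, x₀ < b :=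
      let ⟨x₀, h₁, h₂⟩ := exists_between (lt_min hlt hb)
      ⟨x₀, ⟨h₁, h₂.trans_le (min_le_left _ _)⟩, h₂.trans_le (min_le_right _ _)⟩
    have hx₀c : genFun d x₀ - x₀ < 1 - 2 * μ1 := by
      have hg := (strictConvexOn_genFun hdnn hdsum hconv).sub_concaveOn
        (concaveOn_id (convex_Icc 0 1))
      have hμ1c : genFun d μ1 - μ1 = 1 - 2 * μ1 := by linarith
      simpa only [Pi.sub_apply, id, hμ2.1.2, hμ1c, max_self] using
        hg.lt_on_openSegment hμ2.1.1 hμ1' hlt.ne (by rwa [openSegment_eq_Ioo hlt])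
    filter_upwards [eventually_le_of_genFun_sub_self_lt hd0 hdnn hdsum hdle hcn hc hμn2_least
      ⟨hμ2.1.1.1.trans hx₀.1.le, hx₀.2.trans hμ1.2⟩ hx₀c] with n hn using hn.trans_lt hx₀b
  · filter_upwards [eventually_ge_atTop 1, hμn_lim.eventually_lt_const (heq ▸ hb)] with n hn hlt
    have hμn_mem : μn n ∈ Icc (0 : ℝ) 1 := Ioo_subset_Icc_self (hμn n hn).1
    exact ((hμn2 n hn).2 ⟨hμn_mem, by linarith [(hμn n hn).2]⟩).trans_lt hlt
end

section
/- Assume H is strictly convex (d_k > 0 for some finite k ≥ 2) and H'(μ¹) > 1, and let f : [0,1] → [0,1] be f(t) = 1 − H(t). Then for t ∈ [0,1], the iterates f^n(t) converge to μ¹ as n → ∞ if and only if t = μ¹ (i.e., μ¹ is a repulsive fixed point and its basin of attraction under f is {μ¹}). -/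
open MeasureTheory ProbabilityTheory Filter Topology

/-!
Near `μ¹` the map `f = 1 - H` is expanding: if `H'(μ¹) > 1`, a polynomial truncation of `H`
already has derivative `> c > 1` at `μ¹`, and since all coefficients are nonnegative the
increments of `H` on `[0,1]` dominate those of any truncation, so
`|f y - μ¹| ≥ c |y - μ¹|` for `y ∈ [0,1]` close to `μ¹`. An orbit converging to `μ¹` is
therefore eventually equal to `μ¹`, and since `H` is strictly increasing, `f` is injective
on `[0,1]`, so the orbit started at `μ¹`.
-/

theorem eventually_nonpos_of_tendsto_zero_of_mul_le_succ {u : ℕ → ℝ} {c : ℝ} (hc : 1 < c)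
    (hu : Tendsto u atTop (𝓝 0)) (hgrow : ∀ᶠ n in atTop, c * u n ≤ u (n + 1)) :
    ∀ᶠ n in atTop, u n ≤ 0 := by
  obtain ⟨N, hN⟩ := eventually_atTop.1 hgrow
  refine eventually_atTop.2 ⟨N, fun n hn => not_lt.1 fun hpos => ?_⟩
  have hpow : ∀ m, c ^ m * u n ≤ u (n + m) := by
    intro m
    induction m with
    | zero => simp
    | succ m ih =>
      calc c ^ (m + 1) * u n = c * (c ^ m * u n) := by ring
        _ ≤ c * u (n + m) := by gcongr
        _ ≤ u (n + (m + 1)) := hN (n + m) (by omega)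
  have hbig : Tendsto (fun m => u (m + n)) atTop atTop :=
    tendsto_atTop_mono (fun m => (hpow m).trans_eq (by rw [add_comm]))
      ((tendsto_pow_atTop_atTop_of_one_lt hc).atTop_mul_const hpos)
  exact not_tendsto_atTop_of_tendsto_nhds (hu.comp (tendsto_add_atTop_nat n)) hbig

theorem eventually_iterate_eq_of_tendsto_of_expanding {α : Type*} [MetricSpace α]
    {f : α → α} {S : Set α} {p x : α} {c : ℝ} (hc : 1 < c) (hS : Set.MapsTo f S S)
    (hexp : ∀ᶠ y in 𝓝 p, y ∈ S → c * dist y p ≤ dist (f y) p) (hx : x ∈ S)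
    (htend : Tendsto (fun n => f^[n] x) atTop (𝓝 p)) :
    ∀ᶠ n in atTop, f^[n] x = p := by
  have hgrow : ∀ᶠ n in atTop, c * dist (f^[n] x) p ≤ dist (f^[n + 1] x) p :=
    (htend.eventually hexp).mono fun n hn => by
      rw [Function.iterate_succ_apply']
      exact hn (hS.iterate n hx)
  have hdist : Tendsto (fun n => dist (f^[n] x) p) atTop (𝓝 0) :=
    tendsto_iff_dist_tendsto_zero.1 htend
  exact (eventually_nonpos_of_tendsto_zero_of_mul_le_succ hc hdist hgrow).mono
    fun n hn => dist_le_zero.1 hn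

theorem HasDerivAt.eventually_mul_dist_le_dist {𝕜 F : Type*} [NontriviallyNormedField 𝕜]
    [NormedAddCommGroup F] [NormedSpace 𝕜 F] {g : 𝕜 → F} {g' : F} {p : 𝕜} {c : ℝ}
    (hg : HasDerivAt g g' p) (hc : c < ‖g'‖) :
    ∀ᶠ y in 𝓝 p, c * dist y p ≤ dist (g y) (g p) := by
  have hslope : ∀ᶠ y in 𝓝[≠] p, c < ‖slope g p y‖ :=
    (hasDerivAt_iff_tendsto_slope.1 hg).norm.eventually (lt_mem_nhds hc)
  filter_upwards [eventually_nhdsWithin_iff.1 hslope] with y hy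
  rcases eq_or_ne y p with rfl | hne
  · simp
  have hpos : 0 < ‖y - p‖ := norm_pos_iff.2 (sub_ne_zero.2 hne)
  have := hy hne
  rw [slope_def_module, norm_smul, norm_inv, inv_mul_eq_div, lt_div_iff₀ hpos] at this
  rw [dist_eq_norm, dist_eq_norm]
  exact this.le

theorem hasDerivAt_sum_range_succ_mul_pow (d : ℕ → ℝ) (n : ℕ) (x : ℝ) :
    HasDerivAt (fun y => ∑ k ∈ Finset.range (n + 1), d k * y ^ k)
      (∑ k ∈ Finset.range n, ((k : ℝ) + 1) * d (k + 1) * x ^ k) x := by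
  refine (HasDerivAt.fun_sum (u := Finset.range (n + 1)) fun k _ =>
    (hasDerivAt_pow k x).const_mul (d k)).congr_deriv ?_
  rw [Finset.sum_range_succ']
  simp only [CharP.cast_eq_zero, zero_mul, mul_zero, add_zero, Nat.cast_add, Nat.cast_one,
    add_tsub_cancel_right]
  exact Finset.sum_congr rfl fun k _ => by ring

section GenFun

variable {d : ℕ → ℝ} (hdnn : ∀ k, 0 ≤ d k)
include hdnn

theorem genFun_nonneg {x : ℝ} (hx : 0 ≤ x) : 0 ≤ genFun d x :=
  tsum_nonneg fun k => mul_nonneg (hdnn k) (pow_nonneg hx k)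

variable (hdsum : Summable d)
include hdsum

theorem summable_genFun {x : ℝ} (hx : x ∈ Set.Icc (0 : ℝ) 1) :
    Summable fun k => d k * x ^ k :=
  hdsum.of_nonneg_of_le (fun k => mul_nonneg (hdnn k) (pow_nonneg hx.1 k))
    fun k => mul_le_of_le_one_right (hdnn k) (pow_le_one₀ hx.1 hx.2)

theorem genFun_le_one (hdle : ∑' k, d k ≤ 1) {x : ℝ} (hx : x ∈ Set.Icc (0 : ℝ) 1) :
    genFun d x ≤ 1 :=
  ((summable_genFun hdnn hdsum hx).tsum_le_tsum
    (fun k => mul_le_of_le_one_right (hdnn k) (pow_le_one₀ hx.1 hx.2)) hdsum).trans hdle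

theorem mapsTo_one_sub_genFun (hdle : ∑' k, d k ≤ 1) :
    Set.MapsTo (fun s => 1 - genFun d s) (Set.Icc 0 1) (Set.Icc 0 1) := fun _ hx =>
  ⟨sub_nonneg.2 (genFun_le_one hdnn hdsum hdle hx),
    sub_le_self 1 (genFun_nonneg hdnn hx.1)⟩

theorem genFun_strictMonoOn {k : ℕ} (hk : k ≠ 0) (hdk : 0 < d k) :
    StrictMonoOn (genFun d) (Set.Icc 0 1) := fun _ hx _ hy hxy =>
  Summable.tsum_lt_tsum (i := k)
    (fun j => mul_le_mul_of_nonneg_left (pow_le_pow_left₀ hx.1 hxy.le j) (hdnn j))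
    (mul_lt_mul_of_pos_left (pow_lt_pow_left₀ hxy hx.1 hk) hdk)
    (summable_genFun hdnn hdsum hx) (summable_genFun hdnn hdsum hy)

theorem dist_sum_range_le_dist_genFun (n : ℕ) {y z : ℝ} (hy : y ∈ Set.Icc (0 : ℝ) 1)
    (hz : z ∈ Set.Icc (0 : ℝ) 1) :
    dist (∑ k ∈ Finset.range n, d k * y ^ k) (∑ k ∈ Finset.range n, d k * z ^ k) ≤
      dist (genFun d y) (genFun d z) := by
  wlog hyz : z ≤ y generalizing y z
  · rw [dist_comm, dist_comm (genFun d y)]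
    exact this hz hy (le_of_not_ge hyz)
  have hterm : ∀ k, 0 ≤ d k * y ^ k - d k * z ^ k := fun k =>
    sub_nonneg.2 (mul_le_mul_of_nonneg_left (pow_le_pow_left₀ hz.1 hyz k) (hdnn k))
  have hsy := summable_genFun hdnn hdsum hy
  have hsz := summable_genFun hdnn hdsum hz
  rw [Real.dist_eq, Real.dist_eq, ← Finset.sum_sub_distrib, genFun, genFun,
    ← hsy.tsum_sub hsz, abs_of_nonneg (Finset.sum_nonneg fun k _ => hterm k),
    abs_of_nonneg (tsum_nonneg hterm)]
  exact (hsy.sub hsz).sum_le_tsum _ fun k _ => hterm k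

theorem genFun_eventually_expanding {μ : ℝ} (hμ : μ ∈ Set.Icc (0 : ℝ) 1)
    (hderiv : 1 < genFunDeriv d μ) :
    ∃ c, 1 < c ∧ ∀ᶠ y in 𝓝 μ, y ∈ Set.Icc (0 : ℝ) 1 →
      c * dist y μ ≤ dist (genFun d y) (genFun d μ) := by
  have hsum : Summable fun k : ℕ => ((k : ℝ) + 1) * d (k + 1) * μ ^ k := by
    by_contra h
    rw [genFunDeriv, tsum_eq_zero_of_not_summable h] at hderiv
    norm_num at hderiv
  obtain ⟨n, hn⟩ := (hsum.hasSum.tendsto_sum_nat.eventually (lt_mem_nhds hderiv)).exists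
  obtain ⟨c, hc1, hcn⟩ := exists_between hn
  have hnorm : c < ‖∑ k ∈ Finset.range n, ((k : ℝ) + 1) * d (k + 1) * μ ^ k‖ :=
    hcn.trans_le (Real.le_norm_self _)
  refine ⟨c, hc1, ?_⟩
  filter_upwards [(hasDerivAt_sum_range_succ_mul_pow d n μ).eventually_mul_dist_le_dist hnorm]
    with y hy hyI
  exact hy.trans (dist_sum_range_le_dist_genFun hdnn hdsum (n + 1) hyI hμ)

end GenFun

theorem basin_of_repulsive_fixed_point_general (d : ℕ → ℝ) (hdnn : ∀ k, 0 ≤ d k)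
    (hdsum : Summable d) (hdle : ∑' k, d k ≤ 1)
    (hconv : ∃ k : ℕ, 2 ≤ k ∧ 0 < d k)
    (μ1 : ℝ) (hμ1 : μ1 ∈ Set.Ioo (0 : ℝ) 1) (hroot : genFun d μ1 + μ1 = 1)
    (hunstable : 1 < genFunDeriv d μ1) :
    ∀ t ∈ Set.Icc (0 : ℝ) 1,
      Tendsto (fun n => (fun s => 1 - genFun d s)^[n] t) atTop (nhds μ1) ↔ t = μ1 := by
  set f : ℝ → ℝ := fun s => 1 - genFun d s
  have hμ : μ1 ∈ Set.Icc (0 : ℝ) 1 := Set.Ioo_subset_Icc_self hμ1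
  have hfix : f μ1 = μ1 := by simp only [f]; linarith
  have hmaps := mapsTo_one_sub_genFun hdnn hdsum hdle
  intro t ht
  refine ⟨fun htend => ?_, fun h => ?_⟩
  · obtain ⟨c, hc, hexp⟩ := genFun_eventually_expanding hdnn hdsum hμ hunstable
    have hexp_f : ∀ᶠ y in 𝓝 μ1, y ∈ Set.Icc (0 : ℝ) 1 → c * dist y μ1 ≤ dist (f y) μ1 := by
      filter_upwards [hexp] with y hy hyI
      calc c * dist y μ1 ≤ dist (genFun d y) (genFun d μ1) := hy hyI
        _ = dist (f y) (f μ1) := (dist_sub_left 1 _ _).symm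
        _ = dist (f y) μ1 := by rw [hfix]
    obtain ⟨n, hn⟩ :=
      (eventually_iterate_eq_of_tendsto_of_expanding hc hmaps hexp_f ht htend).exists
    obtain ⟨k, hk, hdk⟩ := hconv
    have hinj : Set.InjOn f (Set.Icc 0 1) := fun _ hx _ hy hxy =>
      (genFun_strictMonoOn hdnn hdsum (by omega) hdk).injOn hx hy (sub_right_inj.1 hxy)
    exact hinj.iterate hmaps n ht hμ (hn.trans (Function.iterate_fixed hfix n).symm)
  · subst h
    simpa only [Function.iterate_fixed hfix] using tendsto_const_nhds

/-- in the unstable case `H'(μ¹) > 1`, the iterates of `f(t) = 1 - H(t)`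
starting from `t ∈ [0,1]` converge to `μ¹` iff `t = μ¹`: the basin of attraction of the
repulsive fixed point `μ¹` is `{μ¹}`. -/
theorem basin_of_repulsive_fixed_point (d : ℕ → ℝ) (hd0 : d 0 = 0) (hdnn : ∀ k, 0 ≤ d k)
    (hdsum : Summable d) (hdle : ∑' k, d k ≤ 1)
    (hconv : ∃ k : ℕ, 2 ≤ k ∧ 0 < d k)
    (μ1 : ℝ) (hμ1 : μ1 ∈ Set.Ioo (0 : ℝ) 1) (hroot : genFun d μ1 + μ1 = 1)
    (hunstable : 1 < genFunDeriv d μ1) :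
    ∀ t ∈ Set.Icc (0 : ℝ) 1,
      Tendsto (fun n => (fun s => 1 - genFun d s)^[n] t) atTop (nhds μ1) ↔ t = μ1 :=
  basin_of_repulsive_fixed_point_general d hdnn hdsum hdle hconv μ1 hμ1 hroot hunstable
end
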